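/- arXiv:1612.05660 — 6 statements merged into one kernel-verified Lean document; each statement's English description precedes it below -/
import Mathlib

section
/- Let C ⊆ {0,1}ⁿ be a neural code. Then I(C) = J_C + ⟨x_i(1+x_i) : i ∈ [n]⟩, where I(C) is the ideal of all polynomials in F₂[x₁,…,xₙ] vanishing on C and J_C is the neural ideal generated by {ρ_v : v ∉ C}. -/
/-! Over a finite field `K`, Alon's Combinatorial Nullstellensatz (applied with every `S i = K`)
shows that the polynomials vanishing on all of `Kⁿ` form the ideal generated by the
`∏_{r ∈ K} (x_i - r)`, which over `F₂` are the `x_i (1 + x_i)`. If `f` vanishes on `C`, then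
`f - ∑_{v ∉ C} f(v) ρ_v` vanishes everywhere, since `ρ_v` is the indicator polynomial of `v`. -/

open MvPolynomial

universe u

/-- The pseudo-monomial `x_σ * ∏_{j ∈ τ} (1 + x_j)` in `F₂[x₁,…,xₙ]`. -/
noncomputable def psm {n : ℕ} (σ τ : Finset (Fin n)) : MvPolynomial (Fin n) (ZMod 2) :=
  (∏ i ∈ σ, X i) * ∏ j ∈ τ, (1 + X j)

/-- A polynomial is a pseudo-monomial if it equals `psm σ τ` for disjoint `σ τ`. -/
def IsPseudoMonomial {n : ℕ} (f : MvPolynomial (Fin n) (ZMod 2)) : Prop :=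
  ∃ σ τ : Finset (Fin n), Disjoint σ τ ∧ f = psm σ τ

/-- The characteristic polynomial `ρ_v = ∏ i (1 - v_i - x_i)` of a point `v ∈ {0,1}ⁿ`. -/
noncomputable def rho {n : ℕ} (v : Fin n → ZMod 2) : MvPolynomial (Fin n) (ZMod 2) :=
  ∏ i, (1 - C (v i) - X i)

/-- The neural ideal `J_C` of a code `Co ⊆ {0,1}ⁿ`. -/
noncomputable def neuralIdeal {n : ℕ} (Co : Set (Fin n → ZMod 2)) :
    Ideal (MvPolynomial (Fin n) (ZMod 2)) :=
  Ideal.span {p | ∃ v, v ∉ Co ∧ p = rho v}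

/-- The canonical form: the set of minimal pseudo-monomials of an ideal. -/
def canonicalForm {n : ℕ} (J : Ideal (MvPolynomial (Fin n) (ZMod 2))) :
    Set (MvPolynomial (Fin n) (ZMod 2)) :=
  {f | IsPseudoMonomial f ∧ f ∈ J ∧
    ∀ g : MvPolynomial (Fin n) (ZMod 2), IsPseudoMonomial g → g ∈ J → g ∣ f → g = f}

/-- The multidegree (exponent of the leading term) of `f` w.r.t. a monomial order `m`. -/
noncomputable def leadDeg {n : ℕ} (m : MonomialOrder.{0,u} (Fin n))
    (f : MvPolynomial (Fin n) (ZMod 2)) : Fin n →₀ ℕ :=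
  m.toSyn.symm (f.support.sup (fun d => m.toSyn d))

/-- The exponent vector of the square-free monomial `x_ω`. -/
noncomputable def expOf {n : ℕ} (ω : Finset (Fin n)) : Fin n →₀ ℕ :=
  ∑ i ∈ ω, Finsupp.single i 1

/-- `G` is a Gröbner basis of `J` w.r.t. the monomial order `m`: a finite subset of `J`
whose leading terms generate the leading term ideal, i.e. the leading term of every nonzero
element of `J` is divisible by the leading term of some element of `G`. -/
def IsGB {n : ℕ} (m : MonomialOrder.{0,u} (Fin n)) (J : Ideal (MvPolynomial (Fin n) (ZMod 2)))
    (G : Set (MvPolynomial (Fin n) (ZMod 2))) : Prop :=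
  G.Finite ∧ G ⊆ (J : Set (MvPolynomial (Fin n) (ZMod 2))) ∧
    ∀ f ∈ J, f ≠ 0 → ∃ g ∈ G, g ≠ 0 ∧ leadDeg m g ≤ leadDeg m f

/-- A reduced Gröbner basis: every element has leading coefficient 1, and no term of any
element is divisible by the leading term of another element. -/
def IsReducedGB {n : ℕ} (m : MonomialOrder.{0,u} (Fin n))
    (J : Ideal (MvPolynomial (Fin n) (ZMod 2)))
    (G : Set (MvPolynomial (Fin n) (ZMod 2))) : Prop :=
  IsGB m J G ∧ (∀ g ∈ G, coeff (leadDeg m g) g = 1) ∧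
    ∀ f ∈ G, ∀ g ∈ G, g ≠ f → ∀ d ∈ f.support, ¬ leadDeg m g ≤ d

/-- The universal Gröbner basis: the union of all reduced Gröbner bases. -/
def universalGB {n : ℕ} (J : Ideal (MvPolynomial (Fin n) (ZMod 2))) :
    Set (MvPolynomial (Fin n) (ZMod 2)) :=
  {f | ∃ (m : MonomialOrder.{0,u} (Fin n)) (G : Set (MvPolynomial (Fin n) (ZMod 2))),
    IsReducedGB m J G ∧ f ∈ G}

/-- The receptive field code of a family of sets `U i` in a stimulus space `S`. -/
def rfCode {n : ℕ} {S : Type} (U : Fin n → Set S) : Set (Fin n → ZMod 2) :=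
  {c | ((⋂ i ∈ {i : Fin n | c i = 1}, U i) \ ⋃ j ∈ {j : Fin n | c j = 0}, U j).Nonempty}

namespace MvPolynomial

theorem prod_univ_X_sub_C_zmod_two {σ : Type*} (i : σ) :
    ∏ r : ZMod 2, (X i - C r) = (X i * (1 + X i) : MvPolynomial σ (ZMod 2)) := by
  rw [show (Finset.univ : Finset (ZMod 2)) = {0, 1} from rfl]
  simp [CharTwo.sub_eq_add, add_comm]

variable {K σ : Type*} [Field K] [Fintype K]

theorem vanishingIdeal_univ_eq_span_prod_X_sub_C [Finite σ] :
    vanishingIdeal K (Set.univ : Set (σ → K)) =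
      Ideal.span (Set.range fun i => ∏ r : K, (X i - C r)) := by
  refine le_antisymm (fun f hf => ?_) (Ideal.span_le.mpr ?_)
  · obtain ⟨h, -, rfl⟩ := combinatorial_nullstellensatz_exists_linearCombination
      (fun _ => Finset.univ) (fun _ => Finset.univ_nonempty) f
      (fun x _ => mem_vanishingIdeal_iff.mp hf x trivial)
    exact Finsupp.mem_span_range_iff_exists_finsupp.mpr ⟨h, rfl⟩
  · rintro _ ⟨i, rfl⟩
    exact mem_vanishingIdeal_iff.mpr fun x _ => by
      simpa [map_prod] using Finset.prod_eq_zero (Finset.mem_univ (x i)) (sub_self (x i))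

theorem vanishingIdeal_eq_span_indicator_sup [Fintype σ] (V : Set (σ → K)) :
    vanishingIdeal K V =
      Ideal.span (indicator '' Vᶜ) ⊔ vanishingIdeal K (Set.univ : Set (σ → K)) := by
  classical
  refine le_antisymm (fun f hf => ?_) (sup_le (Ideal.span_le.mpr ?_)
    (vanishingIdeal_anti_mono (Set.subset_univ V)))
  · set s := ∑ v ∈ Vᶜ.toFinset, C (eval v f) * indicator v
    have hs : s ∈ Ideal.span (indicator '' Vᶜ) :=
      Ideal.sum_mem _ fun v hv => Ideal.mul_mem_left _ _
        (Ideal.subset_span ⟨v, Set.mem_toFinset.mp hv, rfl⟩)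
    have hfs : f - s ∈ vanishingIdeal K (Set.univ : Set (σ → K)) := by
      refine mem_vanishingIdeal_iff.mpr fun c _ => ?_
      have hterm (v : σ → K) :
          eval c (C (eval v f) * indicator v) = if v = c then eval c f else 0 := by
        split_ifs with hvc
        · simp [hvc, eval_indicator_apply_eq_one]
        · simp [eval_indicator_apply_eq_zero c v (Ne.symm hvc)]
      by_cases hc : c ∈ V
      · have hfc : eval c f = 0 := mem_vanishingIdeal_iff.mp hf c hc
        simp [aeval_eq_eval, s, hterm, hfc]
      · simp [aeval_eq_eval, s, hterm, hc]
    exact Submodule.mem_sup.mpr ⟨s, hs, f - s, hfs, add_sub_cancel s f⟩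
  · rintro _ ⟨v, hv, rfl⟩
    exact mem_vanishingIdeal_iff.mpr fun c hc => by
      simp [aeval_eq_eval, eval_indicator_apply_eq_zero c v (ne_of_mem_of_not_mem hc hv)]

end MvPolynomial

theorem rho_eq_indicator {n : ℕ} (v : Fin n → ZMod 2) : rho v = indicator v := by
  refine Finset.prod_congr rfl fun i _ => ?_
  simp [CharTwo.sub_eq_add]
  ring

/-- `I(C) = J_C + ⟨x_i(1+x_i) : i⟩`. -/
theorem stmt3 {n : ℕ} (Co : Set (Fin n → ZMod 2)) :
    {f : MvPolynomial (Fin n) (ZMod 2) | ∀ c ∈ Co, MvPolynomial.eval c f = 0} =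
      ↑(neuralIdeal Co +
        Ideal.span {p : MvPolynomial (Fin n) (ZMod 2) | ∃ i : Fin n, p = X i * (1 + X i)}) := by
  have hJ : {p | ∃ v, v ∉ Co ∧ p = rho v} = indicator '' Coᶜ := by
    ext p
    simp [rho_eq_indicator, eq_comm]
  have hB : {p : MvPolynomial (Fin n) (ZMod 2) | ∃ i : Fin n, p = X i * (1 + X i)} =
      Set.range fun i => ∏ r : ZMod 2, (X i - C r) := by
    ext p
    simp [prod_univ_X_sub_C_zmod_two, eq_comm]
  rw [neuralIdeal, hJ, hB, ← vanishingIdeal_univ_eq_span_prod_X_sub_C, Submodule.add_eq_sup,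
    ← vanishingIdeal_eq_span_indicator_sup]
  rfl
end

section
/- Let f = x_σ ∏_{j∈τ}(1+x_j) be a pseudo-monomial and define its hypercube H(f) := {ω : σ ⊆ ω ⊆ σ∪τ} ⊆ 2^{[n]}. For pseudo-monomials f = x_σ∏_{i∈τ}(1+x_i) and g = x_α∏_{j∈β}(1+x_j), g divides f if and only if H(g) ⊆ P(σ∪τ) and |H(g) ∩ P(σ)| = 1, where P(ω) denotes the power set of ω. -/
open MvPolynomial

universe u

/-- The hypercube of the pseudo-monomial `x_σ ∏_{j∈τ}(1+x_j)`:
the interval `{ω : σ ⊆ ω ⊆ σ∪τ}` of the Boolean lattice. -/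
def hcube {n : ℕ} (σ τ : Finset (Fin n)) : Finset (Finset (Fin n)) :=
  (σ ∪ τ).powerset.filter (fun ω => σ ⊆ ω)

/-!
Evaluated at the indicator vector of `ω`, the pseudo-monomial `psm α β` is `1` when `α ⊆ ω` and
`β ∩ ω = ∅`, and `0` otherwise. Evaluating a divisibility `psm α β ∣ psm σ τ` at the indicator
vectors of `σ` and of the complement of `τ` therefore forces `α ⊆ σ` and `β ⊆ τ`; conversely these
inclusions exhibit the quotient `psm (σ \ α) (τ \ β)`.

On the combinatorial side `H(g)` is the interval `[α, α ∪ β]`, so `H(g) ⊆ P(σ ∪ τ)` says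
`α ∪ β ⊆ σ ∪ τ`, and `H(g) ∩ P(σ) = [α, (α ∪ β) ∩ σ]` is a singleton iff `(α ∪ β) ∩ σ = α`.
Under the disjointness hypotheses these two conditions say exactly `α ⊆ σ ∧ β ⊆ τ`.
-/

namespace Finset

variable {α : Type*} {a b c : α}

theorem card_Icc_eq_one_iff [PartialOrder α] [LocallyFiniteOrder α] : #(Icc a b) = 1 ↔ a = b := by
  simp [card_eq_one, Icc_eq_singleton_iff, eq_comm]

variable [Lattice α] [LocallyFiniteOrder α] [LocallyFiniteOrderBot α]

theorem Icc_subset_Iic_iff_of_le (h : a ≤ b) : Icc a b ⊆ Iic c ↔ b ≤ c :=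
  ⟨fun hs => mem_Iic.1 (hs (right_mem_Icc.2 h)),
    fun hbc _ hx => mem_Iic.2 ((mem_Icc.1 hx).2.trans hbc)⟩

theorem Icc_inter_Iic_eq [DecidableEq α] : Icc a b ∩ Iic c = Icc a (b ⊓ c) := by
  ext x
  simp only [mem_inter, mem_Icc, mem_Iic, le_inf_iff, and_assoc]

end Finset

open Finset

section

variable {n : ℕ}

theorem hcube_eq_Icc (σ τ : Finset (Fin n)) : hcube σ τ = Icc σ (σ ∪ τ) :=
  (Icc_eq_filter_powerset σ (σ ∪ τ)).symm

theorem eval_indicator_psm (σ τ ω : Finset (Fin n)) :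
    eval (fun i => if i ∈ ω then 1 else 0) (psm σ τ) =
      if σ ⊆ ω ∧ Disjoint τ ω then 1 else 0 := by
  have h : ∀ i, (1 + if i ∈ ω then 1 else 0 : ZMod 2) = if i ∉ ω then 1 else 0 := by
    intro i; split_ifs <;> decide
  simp only [psm, map_mul, map_prod, eval_X, map_add, map_one, h, prod_boole, subset_iff,
    disjoint_left, ite_zero_mul_ite_zero, mul_one]

theorem subset_and_disjoint_of_psm_dvd {σ τ α β ω : Finset (Fin n)}
    (h : psm α β ∣ psm σ τ) (hω : σ ⊆ ω ∧ Disjoint τ ω) : α ⊆ ω ∧ Disjoint β ω := by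
  have hdvd := map_dvd (eval fun i => if i ∈ ω then 1 else 0) h
  rw [eval_indicator_psm, eval_indicator_psm, if_pos hω] at hdvd
  by_contra hαβ
  rw [if_neg hαβ, zero_dvd_iff] at hdvd
  exact one_ne_zero hdvd

theorem psm_dvd_psm {σ τ α β : Finset (Fin n)} (hα : α ⊆ σ) (hβ : β ⊆ τ) :
    psm α β ∣ psm σ τ :=
  ⟨psm (σ \ α) (τ \ β), by
    simp only [psm, ← prod_sdiff hα, ← prod_sdiff hβ]
    ring⟩

theorem psm_dvd_psm_iff {σ τ α β : Finset (Fin n)} (hστ : Disjoint σ τ) :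
    psm α β ∣ psm σ τ ↔ α ⊆ σ ∧ β ⊆ τ := by
  refine ⟨fun h => ⟨?_, ?_⟩, fun h => psm_dvd_psm h.1 h.2⟩
  · exact (subset_and_disjoint_of_psm_dvd h ⟨subset_rfl, hστ.symm⟩).1
  · exact disjoint_compl_right_iff.1 (subset_and_disjoint_of_psm_dvd h (ω := τᶜ)
      ⟨subset_compl_iff_disjoint_right.2 hστ, disjoint_compl_right⟩).2

theorem hcube_subset_powerset_and_card_eq_one_iff {σ τ α β : Finset (Fin n)}
    (hστ : Disjoint σ τ) (hαβ : Disjoint α β) :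
    hcube α β ⊆ (σ ∪ τ).powerset ∧ #(hcube α β ∩ σ.powerset) = 1 ↔ α ⊆ σ ∧ β ⊆ τ := by
  rw [hcube_eq_Icc, ← Iic_eq_powerset, ← Iic_eq_powerset,
    Icc_subset_Iic_iff_of_le subset_union_left, Icc_inter_Iic_eq, card_Icc_eq_one_iff]
  rw [disjoint_left] at hστ hαβ
  simp only [inf_eq_inter, Finset.ext_iff, subset_iff, mem_union, mem_inter]
  grind

end

/-- `g ∣ f` iff `H(g) ⊆ P(σ∪τ)` and `|H(g) ∩ P(σ)| = 1`. -/
theorem stmt6 {n : ℕ} (σ τ α β : Finset (Fin n)) (h1 : Disjoint σ τ) (h2 : Disjoint α β) :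
    psm α β ∣ psm σ τ ↔
      hcube α β ⊆ (σ ∪ τ).powerset ∧ (hcube α β ∩ σ.powerset).card = 1 :=
  (psm_dvd_psm_iff h1).trans (hcube_subset_powerset_and_card_eq_one_iff h1 h2).symm
end

section
/- Let f be a pseudo-monomial in F₂[x₁,…,xₙ] and G a finite set of pseudo-monomials. If the multivariate division algorithm applied to f with divisors G (under some monomial ordering) yields remainder 0, then there exists g ∈ G such that g divides f. -/
/-!
Write `f = x_σ ∏_{j ∈ τ} (1 + x_j)` and evaluate at the characteristic vector `v` of `σ`, so that
`f(v) = 1`. Every remainder only involves the variables of `σ ∪ τ`, hence so does each divisor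
`g = x_σ' ∏_{j ∈ τ'} (1 + x_j)` used in a step, since its leading monomial `x_{σ' ∪ τ'}` divides
that of the remainder. Then `g ∤ f` forces `σ' ⊄ σ` or `τ' ∩ σ ≠ ∅`, and either way `g(v) = 0`.
So every remainder takes the value `1` at `v` and none of them is `0`.
-/

open MvPolynomial

universe u

section Supported

variable {σ R : Type*} [CommRing R] {s : Set σ}

theorem MonomialOrder.support_degree_subset_of_mem_supported (m : MonomialOrder σ)
    {p : MvPolynomial σ R} (hp : p ∈ supported R s) : ↑(m.degree p).support ⊆ s := by
  rcases eq_or_ne p 0 with rfl | hp0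
  · simp
  · intro i hi
    exact mem_supported.mp hp
      ((mem_vars_iff_mem_support i).mpr ⟨_, m.degree_mem_support hp0, hi⟩)

theorem monomial_mem_supported {d : σ →₀ ℕ} (hd : ↑d.support ⊆ s) (c : R) :
    monomial d c ∈ supported R s := by
  rcases eq_or_ne c 0 with rfl | hc
  · simp
  · exact mem_supported.mpr (by rwa [vars_monomial hc])

theorem MonomialOrder.sub_monomial_mul_mem_supported (m : MonomialOrder σ)
    {p g : MvPolynomial σ R} (hp : p ∈ supported R s) (hg : g ∈ supported R s) (c : R) :
    p - monomial (m.degree p - m.degree g) c * g ∈ supported R s :=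
  sub_mem hp <| mul_mem (monomial_mem_supported
    ((Finset.coe_subset.mpr Finsupp.support_tsub).trans
      (m.support_degree_subset_of_mem_supported hp)) c) hg

end Supported

section PseudoMonomial

variable {n : ℕ}

theorem leadDeg_eq_degree (m : MonomialOrder.{0,u} (Fin n)) (f : MvPolynomial (Fin n) (ZMod 2)) :
    leadDeg m f = m.degree f := rfl

theorem support_expOf (s : Finset (Fin n)) : (expOf s).support = s := by
  classical
  ext i
  simp [expOf, Finsupp.finsetSum_apply, Finsupp.single_apply]

theorem degree_psm (m : MonomialOrder (Fin n)) (σ τ : Finset (Fin n)) :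
    m.degree (psm σ τ) = expOf σ + expOf τ := by
  have hX : ∀ i, m.degree (X i : MvPolynomial (Fin n) (ZMod 2)) = Finsupp.single i 1 :=
    fun i => m.degree_X
  have h1X : ∀ j, m.degree (1 + X j : MvPolynomial (Fin n) (ZMod 2)) = Finsupp.single j 1 := by
    intro j
    rw [m.degree_add_eq_right_of_lt, hX]
    simp [hX, m.toSyn_lt_iff_ne_zero]
  have h1X0 : ∀ j, (1 + X j : MvPolynomial (Fin n) (ZMod 2)) ≠ 0 := fun j h => by
    simpa [h, eq_comm] using h1X j
  rw [psm, m.degree_mul, m.degree_prod, m.degree_prod]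
  · simp [expOf, hX, h1X]
  all_goals simp [Finset.prod_ne_zero_iff, X_ne_zero, h1X0]

theorem psm_mem_supported (σ τ : Finset (Fin n)) :
    psm σ τ ∈ supported (ZMod 2) (↑(σ ∪ τ) : Set (Fin n)) := by
  refine mul_mem (prod_mem fun i hi => ?_) (prod_mem fun j hj => add_mem (one_mem _) ?_)
  · simp [hi]
  · simp [hj]

theorem psm_dvd_psm_s8 {σ' τ' σ τ : Finset (Fin n)} (hσ : σ' ⊆ σ) (hτ : τ' ⊆ τ) :
    psm σ' τ' ∣ psm σ τ :=
  ⟨psm (σ \ σ') (τ \ τ'), by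
    rw [psm, psm, psm, ← Finset.prod_sdiff hσ, ← Finset.prod_sdiff hτ]
    ring⟩

def charVec (s : Finset (Fin n)) : Fin n → ZMod 2 := fun i => if i ∈ s then 1 else 0

theorem eval_charVec_psm (s σ τ : Finset (Fin n)) :
    eval (charVec s) (psm σ τ) = if σ ⊆ s ∧ Disjoint τ s then 1 else 0 := by
  have h : ∀ j, (1 + charVec s j : ZMod 2) = if j ∉ s then 1 else 0 := by
    intro j; unfold charVec; split_ifs <;> decide
  simp only [psm, map_mul, map_prod, eval_X, map_add, map_one, h]
  simp only [charVec, Finset.prod_boole, Finset.subset_iff, Finset.disjoint_left]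
  split_ifs <;> simp_all

theorem eval_charVec_psm_self {σ τ : Finset (Fin n)} (h : Disjoint σ τ) :
    eval (charVec σ) (psm σ τ) = 1 := by
  rw [eval_charVec_psm, if_pos ⟨subset_rfl, h.symm⟩]

theorem eval_charVec_psm_eq_zero {σ' τ' σ τ : Finset (Fin n)} (hsub : σ' ∪ τ' ⊆ σ ∪ τ)
    (hndvd : ¬psm σ' τ' ∣ psm σ τ) : eval (charVec σ) (psm σ' τ') = 0 := by
  rw [eval_charVec_psm, if_neg]
  rintro ⟨hσ, hτ⟩
  refine hndvd (psm_dvd_psm_s8 hσ fun j hj => ?_)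
  exact (Finset.mem_union.mp (hsub (Finset.mem_union_right _ hj))).resolve_left
    (Finset.disjoint_left.mp hτ hj)

theorem union_subset_of_degree_psm_le (m : MonomialOrder (Fin n)) {σ τ s : Finset (Fin n)}
    {p : MvPolynomial (Fin n) (ZMod 2)} (hp : p ∈ supported (ZMod 2) (↑s : Set (Fin n)))
    (hle : m.degree (psm σ τ) ≤ m.degree p) : σ ∪ τ ⊆ s := by
  classical
  intro i hi
  have hi' : i ∈ (m.degree (psm σ τ)).support := by
    rwa [degree_psm, Finsupp.support_add_eq_union, support_expOf, support_expOf]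
  exact_mod_cast m.support_degree_subset_of_mem_supported hp (Finsupp.support_mono hle hi')

end PseudoMonomial

/-- if the multivariate division of a pseudo-monomial `f` by a finite set `G`
of pseudo-monomials (w.r.t. some monomial ordering) has remainder `0`, then some `g ∈ G`
divides `f`.  The division is encoded by its trace `r 0 = f, …, r t = 0`, where at each step
one subtracts `(LT(r k)/LT(g)) * g` for some `g ∈ G` whose leading term divides `LT(r k)`. -/
theorem stmt8 {n : ℕ} (m : MonomialOrder.{0,u} (Fin n)) (f : MvPolynomial (Fin n) (ZMod 2))
    (hf : IsPseudoMonomial f)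
    (G : Finset (MvPolynomial (Fin n) (ZMod 2))) (hG : ∀ g ∈ G, IsPseudoMonomial g)
    (t : ℕ) (r : ℕ → MvPolynomial (Fin n) (ZMod 2))
    (h0 : r 0 = f) (ht : r t = 0)
    (hstep : ∀ k < t, r k ≠ 0 ∧ ∃ g ∈ G,
      leadDeg m g ≤ leadDeg m (r k) ∧
      r (k+1) = r k - monomial (leadDeg m (r k) - leadDeg m g) 1 * g) :
    ∃ g ∈ G, g ∣ f := by
  obtain ⟨σ, τ, hστ, rfl⟩ := hf
  by_contra! hndvd
  have hrem : ∀ k ≤ t, r k ∈ supported (ZMod 2) (↑(σ ∪ τ) : Set (Fin n)) ∧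
      eval (charVec σ) (r k) = 1 := by
    intro k hk
    induction k with
    | zero => exact h0 ▸ ⟨psm_mem_supported σ τ, eval_charVec_psm_self hστ⟩
    | succ k ih =>
      obtain ⟨hmem, heval⟩ := ih (by omega)
      obtain ⟨-, g, hg, hle, hnext⟩ := hstep k (by omega)
      obtain ⟨σ', τ', -, rfl⟩ := hG g hg
      rw [leadDeg_eq_degree, leadDeg_eq_degree] at hle hnext
      have hsub := union_subset_of_degree_psm_le m hmem hle
      have hg_mem :=
        supported_mono (R := ZMod 2) (by exact_mod_cast hsub) (psm_mem_supported σ' τ')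
      refine hnext ▸ ⟨m.sub_monomial_mul_mem_supported hmem hg_mem 1, ?_⟩
      rw [map_sub, map_mul, eval_charVec_psm_eq_zero hsub (hndvd _ hg), mul_zero, sub_zero, heval]
  simpa [ht] using (hrem t le_rfl).2
end

section
/- Let J_C be a neural ideal and G a reduced Gröbner basis of J_C with respect to some monomial ordering. Then every pseudo-monomial contained in G is a minimal pseudo-monomial of J_C, i.e., belongs to the canonical form CF(J_C). -/
open MvPolynomial

universe u

/-!
If `g ∈ J` divides `f ∈ G`, then the leading monomial of `g` divides that of `f`. The Gröbner
property yields some element of `G` whose leading monomial divides that of `g`, hence that of `f`,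
and reducedness forces this element to be `f` itself. So `g` and `f` have the same leading
monomial, and the cofactor is a nonzero constant of `𝔽₂`, i.e. `1`.

`leadDeg m` is definitionally `m.degree`, so Mathlib's lemmas about the latter apply to it.
-/

namespace IsReducedGB

variable {n : ℕ} {m : MonomialOrder.{0,u} (Fin n)} {J : Ideal (MvPolynomial (Fin n) (ZMod 2))}
  {G : Set (MvPolynomial (Fin n) (ZMod 2))} {f g : MvPolynomial (Fin n) (ZMod 2)}

theorem ne_zero (hG : IsReducedGB m J G) (hf : f ∈ G) : f ≠ 0 := by
  rintro rfl
  simpa using hG.2.1 0 hf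

theorem leadDeg_eq_of_le (hG : IsReducedGB m J G) (hf : f ∈ G) (hgJ : g ∈ J) (hg : g ≠ 0)
    (hle : leadDeg m g ≤ leadDeg m f) : leadDeg m g = leadDeg m f := by
  obtain ⟨f', hf'G, -, hf'g⟩ := hG.1.2.2 g hgJ hg
  obtain rfl : f' = f := by
    by_contra hne
    exact hG.2.2 f hf f' hf'G hne _ ((m.degree_mem_support_iff f).2 (hG.ne_zero hf))
      (hf'g.trans hle)
  exact le_antisymm hle hf'g

theorem eq_of_dvd (hG : IsReducedGB m J G) (hf : f ∈ G) (hgJ : g ∈ J) (hgf : g ∣ f) :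
    g = f := by
  obtain ⟨q, rfl⟩ := hgf
  have hg : g ≠ 0 := left_ne_zero_of_mul (hG.ne_zero hf)
  have hq : q ≠ 0 := right_ne_zero_of_mul (hG.ne_zero hf)
  have hdeg : leadDeg m (g * q) = leadDeg m g + leadDeg m q := m.degree_mul hg hq
  have hq0 : m.degree q = 0 := by
    have := hG.leadDeg_eq_of_le hf hgJ hg (hdeg ▸ le_self_add)
    rwa [hdeg, left_eq_add] at this
  have hlc : m.leadingCoeff q = 1 := by
    have hne := m.leadingCoeff_ne_zero_iff.2 hq
    generalize m.leadingCoeff q = c at hne ⊢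
    revert c; decide
  rw [m.degree_eq_zero_iff.mp hq0, hlc, C_1, mul_one]

theorem mem_canonicalForm (hG : IsReducedGB m J G) (hf : f ∈ G) (hpm : IsPseudoMonomial f) :
    f ∈ canonicalForm J :=
  ⟨hpm, hG.1.2.1 hf, fun _ _ hgJ => hG.eq_of_dvd hf hgJ⟩

end IsReducedGB

/-- every pseudo-monomial in a reduced Gröbner basis of a neural ideal belongs
to the canonical form. -/
theorem stmt11 {n : ℕ} (Co : Set (Fin n → ZMod 2)) (m : MonomialOrder.{0,u} (Fin n))
    (G : Set (MvPolynomial (Fin n) (ZMod 2))) (h : IsReducedGB m (neuralIdeal Co) G) :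
    ∀ f ∈ G, IsPseudoMonomial f → f ∈ canonicalForm (neuralIdeal Co) :=
  fun _ hf hpm => h.mem_canonicalForm hf hpm
end

section
/- Let C ⊊ {0,1}ⁿ be a complement-complete neural code (c ∈ C implies c̄ ∈ C, where c̄_i = 1-c_i). If h is a pseudo-monomial in the neural ideal J_C, then its complement h̄ is also in J_C. -/
open MvPolynomial

universe u

/-! The substitution `x_i ↦ 1 + x_i` is an algebra endomorphism of `F₂[x₁,…,xₙ]` that sends
`psm σ τ` to its complement `psm τ σ` and `ρ_v` to `ρ_{v̄}`. For a complement-complete code it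
therefore maps the generators of `J_C` into `J_C`, hence maps `J_C` into itself. -/

section complementMap

variable {n : ℕ}

noncomputable def complementMap :
    MvPolynomial (Fin n) (ZMod 2) →ₐ[ZMod 2] MvPolynomial (Fin n) (ZMod 2) :=
  aeval fun i => 1 + X i

lemma complementMap_X (i : Fin n) : complementMap (X i) = 1 + X i :=
  aeval_X _ i

lemma complementMap_one_add_X (i : Fin n) : complementMap (1 + X i) = X i := by
  rw [map_add, map_one, complementMap_X, ← add_assoc, CharTwo.add_self_eq_zero, zero_add]

lemma complementMap_psm (σ τ : Finset (Fin n)) : complementMap (psm σ τ) = psm τ σ := by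
  simp only [psm, map_mul, map_prod, complementMap_X, complementMap_one_add_X, mul_comm]

lemma complementMap_rho (v : Fin n → ZMod 2) :
    complementMap (rho v) = rho fun i => 1 - v i := by
  refine (map_prod _ _ _).trans (Finset.prod_congr rfl fun i _ => ?_)
  rw [map_sub, map_sub, map_one, complementMap_X, algHom_C, algebraMap_eq, map_sub, C_1]
  simp only [CharTwo.sub_eq_add]
  ring

lemma complementMap_mem_neuralIdeal {Co : Set (Fin n → ZMod 2)}
    (hcc : ∀ c ∈ Co, (fun i => 1 - c i) ∈ Co) {f : MvPolynomial (Fin n) (ZMod 2)}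
    (hf : f ∈ neuralIdeal Co) : complementMap f ∈ neuralIdeal Co := by
  suffices neuralIdeal Co ≤ (neuralIdeal Co).comap complementMap from this hf
  refine Ideal.span_le.2 ?_
  rintro _ ⟨v, hv, rfl⟩
  refine Ideal.subset_span ⟨fun i => 1 - v i, fun hv' => hv ?_, complementMap_rho v⟩
  simpa using hcc _ hv'

end complementMap

theorem stmt16_general {n : ℕ} (Co : Set (Fin n → ZMod 2))
    (hcc : ∀ c ∈ Co, (fun i => 1 - c i) ∈ Co)
    (σ τ : Finset (Fin n)) (hmem : psm σ τ ∈ neuralIdeal Co) :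
    psm τ σ ∈ neuralIdeal Co :=
  complementMap_psm σ τ ▸ complementMap_mem_neuralIdeal hcc hmem

/-- for a complement-complete code `C ⊊ {0,1}ⁿ`, if a pseudo-monomial `h` is in
`J_C` then so is its complement `h̄`. -/
theorem stmt16 {n : ℕ} (Co : Set (Fin n → ZMod 2)) (hC : Co ≠ Set.univ)
    (hcc : ∀ c ∈ Co, (fun i => 1 - c i) ∈ Co)
    (σ τ : Finset (Fin n)) (hd : Disjoint σ τ) (hmem : psm σ τ ∈ neuralIdeal Co) :
    psm τ σ ∈ neuralIdeal Co :=
  stmt16_general Co hcc σ τ hmem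
end

section
/- Let U₁,…,Uₙ be sets in a stimulus space X with receptive field code C = C(𝒰), and let i₁ < … < i_m (m ≥ 2). If the polynomial x_{i₁} + ⋯ + x_{i_m} lies in the neural ideal J_C, then U_{i_k} ⊆ ⋃_{j∈[m]\{k\}} U_{i_j} for every k; and if additionally m is odd, then ⋂_{k=1}^m U_{i_k} = ∅. -/
/-!
Evaluating at the codeword `c(p)` of a stimulus `p` turns `x_{i₁} + ⋯ + x_{i_m}` into the
number, mod 2, of the sets `U_{i_k}` containing `p`. As `c(p)` lies in the code and `J_C`
vanishes on the code, every point of `X` lies in an even number of the `U_{i_k}`: never in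
exactly one, and (for `m` odd) never in all of them.
-/

open MvPolynomial

universe u

section NeuralIdeal

variable {n : ℕ}

theorem eval_rho_of_ne {v c : Fin n → ZMod 2} (hvc : v ≠ c) : eval c (rho v) = 0 := by
  obtain ⟨i, hi⟩ := Function.ne_iff.mp hvc
  have hvanish : ∀ a b : ZMod 2, a ≠ b → 1 - a - b = 0 := by decide
  rw [rho, map_prod]
  refine Finset.prod_eq_zero (Finset.mem_univ i) ?_
  simpa only [map_sub, eval_C, eval_X, map_one] using hvanish _ _ hi

theorem neuralIdeal_le_ker_eval {Co : Set (Fin n → ZMod 2)} {c : Fin n → ZMod 2}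
    (hc : c ∈ Co) : neuralIdeal Co ≤ RingHom.ker (eval c) := by
  refine Ideal.span_le.mpr ?_
  rintro _ ⟨v, hv, rfl⟩
  exact eval_rho_of_ne fun hvc => hv (hvc ▸ hc)

end NeuralIdeal

section ReceptiveFieldCode

variable {n : ℕ} {S : Type} (U : Fin n → Set S)

open Classical

noncomputable def codeword (p : S) : Fin n → ZMod 2 := fun i => if p ∈ U i then 1 else 0

theorem codeword_mem_rfCode (p : S) : codeword U p ∈ rfCode U := by
  refine ⟨p, Set.mem_iInter₂.mpr fun i hi => ?_, ?_⟩
  · by_contra hp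
    simp [codeword, hp] at hi
  · simp only [Set.mem_iUnion, not_exists]
    intro j hj hp
    simp [codeword, hp] at hj

theorem even_card_mem_of_sum_X_mem_neuralIdeal {ι : Type*} [Fintype ι] {idx : ι → Fin n}
    (h : (∑ k, X (idx k) : MvPolynomial (Fin n) (ZMod 2)) ∈ neuralIdeal (rfCode U)) (p : S) :
    Even (Finset.univ.filter fun k => p ∈ U (idx k)).card := by
  have hzero := neuralIdeal_le_ker_eval (codeword_mem_rfCode U p) h
  rw [RingHom.mem_ker, map_sum] at hzero
  simp only [eval_X, codeword] at hzero
  rw [Finset.sum_boole] at hzero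
  exact ZMod.natCast_eq_zero_iff_even.mp hzero

end ReceptiveFieldCode

section EvenCover

open Classical

variable {ι S : Type*} [Fintype ι] {V : ι → Set S}

theorem subset_biUnion_ne_of_even_card_mem
    (heven : ∀ p, Even (Finset.univ.filter fun j => p ∈ V j).card) (k : ι) :
    V k ⊆ ⋃ j ∈ {j | j ≠ k}, V j := by
  intro p hp
  by_contra hcover
  simp only [Set.mem_iUnion, Set.mem_ofPred_eq, not_exists] at hcover
  have honly : (Finset.univ.filter fun j => p ∈ V j) = {k} := by
    ext j
    simp only [Finset.mem_filter, Finset.mem_univ, true_and, Finset.mem_singleton]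
    exact ⟨fun hj => by_contra fun hjk => hcover j hjk hj, fun hjk => hjk ▸ hp⟩
  have := heven p
  rw [honly, Finset.card_singleton] at this
  exact Nat.not_even_one this

theorem iInter_eq_empty_of_even_card_mem
    (heven : ∀ p, Even (Finset.univ.filter fun j => p ∈ V j).card)
    (hodd : Odd (Fintype.card ι)) : ⋂ j, V j = ∅ := by
  refine Set.eq_empty_of_forall_notMem fun p hp => ?_
  have hall : (Finset.univ.filter fun j => p ∈ V j) = Finset.univ :=
    Finset.filter_true_of_mem fun j _ => Set.mem_iInter.mp hp j
  have := heven p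
  rw [hall, Finset.card_univ] at this
  exact Nat.not_odd_iff_even.mpr this hodd

end EvenCover

theorem stmt18_general {n : ℕ} {S : Type} (U : Fin n → Set S) (m : ℕ)
    (idx : Fin m → Fin n)
    (h : (∑ k, X (idx k) : MvPolynomial (Fin n) (ZMod 2)) ∈ neuralIdeal (rfCode U)) :
    (∀ k : Fin m, U (idx k) ⊆ ⋃ j ∈ {j : Fin m | j ≠ k}, U (idx j)) ∧
    (Odd m → ⋂ k : Fin m, U (idx k) = ∅) := by
  have heven := even_card_mem_of_sum_X_mem_neuralIdeal U h
  refine ⟨subset_biUnion_ne_of_even_card_mem heven, fun hodd => ?_⟩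
  exact iInter_eq_empty_of_even_card_mem heven (by rwa [Fintype.card_fin])

/-- if `x_{i₁} + ⋯ + x_{i_m} ∈ J_{C(𝒰)}` (with `i₁ < … < i_m`, `m ≥ 2`), then
each `U_{i_k}` is covered by the other `U_{i_j}`; and if `m` is odd then `⋂ U_{i_k} = ∅`. -/
theorem stmt18 {n : ℕ} {S : Type} (U : Fin n → Set S) (m : ℕ) (hm : 2 ≤ m)
    (idx : Fin m → Fin n) (hmono : StrictMono idx)
    (h : (∑ k, X (idx k) : MvPolynomial (Fin n) (ZMod 2)) ∈ neuralIdeal (rfCode U)) :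
    (∀ k : Fin m, U (idx k) ⊆ ⋃ j ∈ {j : Fin m | j ≠ k}, U (idx j)) ∧
    (Odd m → ⋂ k : Fin m, U (idx k) = ∅) :=
  stmt18_general U m idx h
end
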